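/- Let H be a Hilbert space and R a bounded linear operator on H with operator norm ‖R‖ < 1. Let Ψ₀, φ ∈ H and λ₀ ∈ ℂ. Suppose g ∈ H is nonzero, ⟨g, φ⟩ ≠ 0, λ ∈ ℂ with λ ≠ λ₀, and g satisfies (I + R) g − (⟨g, φ⟩/(λ₀ − λ)) Ψ₀ = 0. Then λ = λ₀ − ⟨(I + R)^{-1} Ψ₀, φ⟩. -/

import Mathlib

open ContinuousLinearMap

/-- Birman–Schwinger type reduction: if `(I+R) g = (⟨g,φ⟩/(λ₀−λ)) Ψ₀` with `g ≠ 0`,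
`⟨g,φ⟩ ≠ 0`, then `λ = λ₀ − ⟨(I+R)⁻¹Ψ₀, φ⟩`.  Here `⟨x,y⟩` denotes the inner product
conjugate-linear in the second argument, i.e. `inner y x` in Mathlib's convention,
and `S` is the (two-sided) inverse of `I + R`, which exists since `‖R‖ < 1`. -/
theorem stmt_6 {H : Type*} [NormedAddCommGroup H] [InnerProductSpace ℂ H] [CompleteSpace H]
    (R : H →L[ℂ] H) (hR : ‖R‖ < 1) (Ψ₀ φ g : H) (lam0 lam : ℂ)
    (hg : g ≠ 0) (hgφ : (inner ℂ φ g : ℂ) ≠ 0) (hlam : lam ≠ lam0)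
    (heq : (1 + R) g - ((inner ℂ φ g : ℂ) / (lam0 - lam)) • Ψ₀ = 0)
    (S : H →L[ℂ] H) (hS1 : S.comp (1 + R) = 1) (hS2 : (1 + R).comp S = 1) :
    lam = lam0 - (inner ℂ φ (S Ψ₀) : ℂ) := by
  set c : ℂ := (inner ℂ φ g : ℂ) / (lam0 - lam) with hc
  have hd : lam0 - lam ≠ 0 := sub_ne_zero.mpr (Ne.symm hlam)
  have h1 : (1 + R) g = c • Ψ₀ := by
    have := sub_eq_zero.mp heq; exact this
  have h2 : g = c • S Ψ₀ := by
    have := congrArg S h1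
    rwa [show S ((1 + R) g) = g from congrFun (congrArg DFunLike.coe hS1) g, map_smul] at this
  have h3 : (inner ℂ φ g : ℂ) = c * (inner ℂ φ (S Ψ₀) : ℂ) := by
    rw [h2, inner_smul_right]
  have h4 : (inner ℂ φ (S Ψ₀) : ℂ) = lam0 - lam := by
    have hcne : c ≠ 0 := div_ne_zero hgφ hd
    rw [hc, div_mul_eq_mul_div, eq_div_iff hd] at h3
    exact (mul_left_cancel₀ hgφ h3).symm
  rw [h4]; ring
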